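/- arXiv:2412.05648 — 2 statements merged into one kernel-verified Lean document; each statement's English description precedes it below -/
import Mathlib

section
/- Let k ≥ 2 and let (r₀,s₀),…,(r_k,s_k) ∈ ℝ². Assume that for all z₁,…,z_k > 0: χ_{−r₀,−s₀}(z₁⋯z_k) ≤ ∑_{j=1}^k χ_{r_j,s_j}(z_j). Then for all n ∈ ℕ, all λ ∈ ℝ₊ⁿ with ∑λᵢ = 1, and all x ∈ ℝ₊^{n×k}: G_{−r₀,−s₀;λ}(x₁¹⋯x₁^k, …, xₙ¹⋯xₙ^k) ≤ G_{r₁,s₁;λ}(x¹) ⋯ G_{r_k,s_k;λ}(x^k). -/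
/-!
Gini means are homogeneous, `G_{r,s;λ}(x / t) = G_{r,s;λ}(x) / t`, and `G_{r,s;λ}(y) ≤ 1`
exactly when `∑ λᵢ χ_{r,s}(yᵢ) ≤ 0`. Normalising the `j`-th column by `T_j = G_{r_j,s_j;λ}(x^j)` therefore
gives `∑ᵢ λᵢ χ_{r_j,s_j}(xᵢ^j / T_j) ≤ 0` for every `j`. Applying the hypothesis to each row
`zⱼ = xᵢ^j / T_j`, weighting by `λᵢ` and summing shows `∑ᵢ λᵢ χ_{-r₀,-s₀}(∏ⱼ xᵢ^j / ∏ⱼ T_j) ≤ 0`,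
that is `G_{-r₀,-s₀;λ}(∏ⱼ x^j) ≤ ∏ⱼ T_j`.
-/

open Finset

/-- The weighted Gini mean `G_{r,s;λ}` (both cases `r ≠ s` and `r = s`). -/
noncomputable def giniMean {n : ℕ} (r s : ℝ) (l : Fin n → ℝ) (x : Fin n → ℝ) : ℝ :=
  if r = s then
    Real.exp ((∑ i, l i * x i ^ r * Real.log (x i)) / ∑ i, l i * x i ^ r)
  else ((∑ i, l i * x i ^ r) / (∑ i, l i * x i ^ s)) ^ ((r - s)⁻¹)

/-- The auxiliary function `χ_{r,s}`. -/
noncomputable def chi (r s t : ℝ) : ℝ :=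
  if r = s then t ^ r * Real.log t else (t ^ r - t ^ s) / (r - s)

lemma sum_mul_div_rpow {ι : Type*} [Fintype ι] {l x : ι → ℝ} (hx : ∀ i, 0 < x i) {t : ℝ}
    (ht : 0 < t) (r : ℝ) : ∑ i, l i * (x i / t) ^ r = (∑ i, l i * x i ^ r) / t ^ r := by
  simp only [Real.div_rpow (hx _).le ht.le, mul_div_assoc', sum_div]

section GiniMean

variable {n : ℕ} [Nonempty (Fin n)] {l x : Fin n → ℝ}

lemma sum_mul_rpow_pos (hl : ∀ i, 0 < l i) (hx : ∀ i, 0 < x i) (r : ℝ) :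
    0 < ∑ i, l i * x i ^ r :=
  sum_pos (fun i _ => mul_pos (hl i) (Real.rpow_pos_of_pos (hx i) r)) univ_nonempty

lemma giniMean_pos (r s : ℝ) (hl : ∀ i, 0 < l i) (hx : ∀ i, 0 < x i) :
    0 < giniMean r s l x := by
  unfold giniMean
  split_ifs
  · exact Real.exp_pos _
  · exact Real.rpow_pos_of_pos
      (div_pos (sum_mul_rpow_pos hl hx r) (sum_mul_rpow_pos hl hx s)) _

lemma giniMean_div (r s : ℝ) (hl : ∀ i, 0 < l i) (hx : ∀ i, 0 < x i) {t : ℝ} (ht : 0 < t) :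
    giniMean r s l (fun i => x i / t) = giniMean r s l x / t := by
  have hA := sum_mul_rpow_pos hl hx r
  have hB := sum_mul_rpow_pos hl hx s
  have htr := Real.rpow_pos_of_pos ht r
  unfold giniMean
  split_ifs with hrs
  · have hlog : ∑ i, l i * (x i / t) ^ r * Real.log (x i / t)
        = ((∑ i, l i * x i ^ r * Real.log (x i)) - Real.log t * ∑ i, l i * x i ^ r) / t ^ r := by
      simp only [Real.div_rpow (hx _).le ht.le, Real.log_div (hx _).ne' ht.ne', mul_sum,
        ← sum_sub_distrib, sum_div]
      exact sum_congr rfl fun i _ => by ring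
    rw [hlog, sum_mul_div_rpow hx ht, div_div_div_cancel_right₀ htr.ne', sub_div,
      mul_div_cancel_right₀ _ hA.ne', Real.exp_sub, Real.exp_log ht]
  · rw [sum_mul_div_rpow hx ht, sum_mul_div_rpow hx ht, div_div_div_eq, mul_comm (t ^ r),
      ← div_div_div_eq, ← Real.rpow_sub ht,
      Real.div_rpow (div_pos hA hB).le (Real.rpow_pos_of_pos ht _).le,
      Real.rpow_rpow_inv ht.le (sub_ne_zero.mpr hrs)]

lemma giniMean_le_one_iff (r s : ℝ) (hl : ∀ i, 0 < l i) (hx : ∀ i, 0 < x i) :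
    giniMean r s l x ≤ 1 ↔ ∑ i, l i * chi r s (x i) ≤ 0 := by
  have hA := sum_mul_rpow_pos hl hx r
  have hB := sum_mul_rpow_pos hl hx s
  unfold giniMean chi
  split_ifs with hrs
  · simp only [Real.exp_le_one_iff, div_nonpos_iff, hA.le, hA.not_ge, mul_assoc]
    tauto
  · have hsum : ∑ i, l i * ((x i ^ r - x i ^ s) / (r - s))
        = ((∑ i, l i * x i ^ r) - ∑ i, l i * x i ^ s) / (r - s) := by
      simp only [← sum_sub_distrib, sum_div, mul_div_assoc', mul_sub]
    simp only [hsum, Real.rpow_le_one_iff_of_pos (div_pos hA hB), div_nonpos_iff, one_le_div hB,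
      div_le_one hB, inv_nonpos, inv_nonneg, sub_nonneg, sub_nonpos]

end GiniMean

theorem gini_holder_global_general
    (k : ℕ) (r s : Fin (k + 1) → ℝ)
    (key : ∀ z : Fin k → ℝ, (∀ j, 0 < z j) →
      chi (-(r 0)) (-(s 0)) (∏ j, z j) ≤ ∑ j, chi (r j.succ) (s j.succ) (z j))
    (n : ℕ) (l : Fin n → ℝ) (hl : ∀ i, 0 < l i) (hl1 : ∑ i, l i = 1)
    (x : Fin n → Fin k → ℝ) (hx : ∀ i j, 0 < x i j) :
    giniMean (-(r 0)) (-(s 0)) l (fun i => ∏ j, x i j) ≤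
      ∏ j, giniMean (r j.succ) (s j.succ) l (fun i => x i j) := by
  have : Nonempty (Fin n) :=
    univ_nonempty_iff.mp (nonempty_of_sum_ne_zero (hl1 ▸ one_ne_zero))
  set T : Fin k → ℝ := fun j => giniMean (r j.succ) (s j.succ) l (fun i => x i j)
  have hT : ∀ j, 0 < T j := fun j => giniMean_pos _ _ hl (hx · j)
  have hcol : ∀ j, ∑ i, l i * chi (r j.succ) (s j.succ) (x i j / T j) ≤ 0 := fun j =>
    (giniMean_le_one_iff _ _ hl fun i => div_pos (hx i j) (hT j)).mp
      (by rw [giniMean_div _ _ hl (hx · j) (hT j), div_self (hT j).ne'])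
  have hrow : ∀ i, chi (-(r 0)) (-(s 0)) ((∏ j, x i j) / ∏ j, T j)
      ≤ ∑ j, chi (r j.succ) (s j.succ) (x i j / T j) := fun i => by
    rw [← prod_div_distrib]
    exact key _ fun j => div_pos (hx i j) (hT j)
  have hprod : ∀ i, 0 < ∏ j, x i j := fun i => prod_pos fun j _ => hx i j
  have hTprod : 0 < ∏ j, T j := prod_pos fun j _ => hT j
  rw [← div_le_one hTprod, ← giniMean_div _ _ hl hprod hTprod, giniMean_le_one_iff _ _ hl
    fun i => div_pos (hprod i) hTprod]
  calc ∑ i, l i * chi (-(r 0)) (-(s 0)) ((∏ j, x i j) / ∏ j, T j)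
      ≤ ∑ i, l i * ∑ j, chi (r j.succ) (s j.succ) (x i j / T j) :=
        sum_le_sum fun i _ => mul_le_mul_of_nonneg_left (hrow i) (hl i).le
    _ = ∑ j, ∑ i, l i * chi (r j.succ) (s j.succ) (x i j / T j) := by
        simp only [mul_sum]
        exact sum_comm
    _ ≤ 0 := sum_nonpos fun j _ => hcol j

/-- If `χ_{−r₀,−s₀}(z₁⋯z_k) ≤ ∑ⱼ χ_{rⱼ,sⱼ}(zⱼ)` for all positive
`z₁,…,z_k`, then the Hölder-type inequality
`G_{−r₀,−s₀;λ}(x₁¹⋯x₁^k,…,xₙ¹⋯xₙ^k) ≤ ∏ⱼ G_{rⱼ,sⱼ;λ}(x^j)` holds globally on `ℝ₊^{n×k}`. -/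
theorem gini_holder_global
    (k : ℕ) (hk : 2 ≤ k) (r s : Fin (k + 1) → ℝ)
    (key : ∀ z : Fin k → ℝ, (∀ j, 0 < z j) →
      chi (-(r 0)) (-(s 0)) (∏ j, z j) ≤ ∑ j, chi (r j.succ) (s j.succ) (z j))
    (n : ℕ) (l : Fin n → ℝ) (hl : ∀ i, 0 < l i) (hl1 : ∑ i, l i = 1)
    (x : Fin n → Fin k → ℝ) (hx : ∀ i j, 0 < x i j) :
    giniMean (-(r 0)) (-(s 0)) l (fun i => ∏ j, x i j) ≤
      ∏ j, giniMean (r j.succ) (s j.succ) l (fun i => x i j) :=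
  gini_holder_global_general k r s key n l hl hl1 x hx
end

section
/- Let k ≥ 2, (r₀,s₀),…,(r_k,s_k) ∈ ℝ², and set γᵢ := rᵢ + sᵢ for i ∈ {0,…,k}. Suppose that either all γ₀,…,γ_k ≥ 0 with at most one equal to zero, or there exists i ∈ {0,…,k} such that γᵢ < 0, γⱼ > 0 for all j ≠ i, and 1/γ₀ + 1/γ₁ + ⋯ + 1/γ_k < 0. Then for all y ∈ ℝ₊^k the k×k matrix with entries (1/(yᵢyⱼ))·(∏_{ℓ=1}^k y_ℓ)·(δ_{ij}γⱼ + γ₀) is positive definite. -/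
/-!
The matrix is `P • Dᴴ A D` with `P = ∏ yℓ`, `D = diag(1/yᵢ)` and `A = diag(γ₁,…,γ_k) + γ₀ J`,
so it suffices that `A` is positive definite. Writing `w = (-∑ vᵢ, v)`, the quadratic form
`vᵀ A v` equals `∑ⱼ γⱼ wⱼ²`, so `A` is positive definite iff `∑ γⱼ wⱼ²` is positive on the
nonzero vectors of the hyperplane `∑ wⱼ = 0`. If all `γⱼ ≥ 0` with at most one zero, this holds
because such a `w` has two nonzero coordinates. If `γᵢ < 0` and the others are positive,
Cauchy–Schwarz gives `wᵢ² = (∑_{j≠i} wⱼ)² ≤ S·T` with `S = ∑_{j≠i} 1/γⱼ`,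
`T = ∑_{j≠i} γⱼ wⱼ²`, hence `∑ γⱼ wⱼ² ≥ T (1 + γᵢ S)`, and `1 + γᵢ S = γᵢ ∑ⱼ 1/γⱼ > 0`.
-/

open Finset

theorem sum_mul_sq_pos_of_nonneg_of_sum_eq_zero {ι : Type*} [Fintype ι] {γ w : ι → ℝ}
    (hγ : ∀ i, 0 ≤ γ i) (hzero : ∀ i j, γ i = 0 → γ j = 0 → i = j)
    (hw : w ≠ 0) (hsum : ∑ i, w i = 0) : 0 < ∑ i, γ i * w i ^ 2 := by
  obtain ⟨i, hi⟩ := Function.ne_iff.mp hw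
  obtain ⟨j, hji, hj⟩ : ∃ j, j ≠ i ∧ w j ≠ 0 := by
    by_contra! hcon
    exact hi (by simpa [sum_eq_single i fun j _ => hcon j] using hsum)
  have hγpos : 0 < γ i ∨ 0 < γ j := by
    by_contra! hcon
    exact hji (hzero j i (le_antisymm hcon.2 (hγ j)) (le_antisymm hcon.1 (hγ i)))
  have hterm : ∀ m, 0 ≤ γ m * w m ^ 2 := fun m => mul_nonneg (hγ m) (sq_nonneg _)
  rcases hγpos with hpos | hpos
  · exact sum_pos' (fun m _ => hterm m) ⟨i, mem_univ _, mul_pos hpos (pow_two_pos_of_ne_zero hi)⟩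
  · exact sum_pos' (fun m _ => hterm m) ⟨j, mem_univ _, mul_pos hpos (pow_two_pos_of_ne_zero hj)⟩

theorem sum_mul_sq_pos_of_sum_inv_neg_of_sum_eq_zero {ι : Type*} [Fintype ι] [DecidableEq ι]
    {γ w : ι → ℝ} {i : ι} (hi : γ i < 0) (hpos : ∀ j, j ≠ i → 0 < γ j)
    (hinv : ∑ j, (γ j)⁻¹ < 0) (hw : w ≠ 0) (hsum : ∑ j, w j = 0) :
    0 < ∑ j, γ j * w j ^ 2 := by
  set s := univ.erase i
  have hs : ∀ j ∈ s, 0 < γ j := fun j hj => hpos j (ne_of_mem_erase hj)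
  have hwi : w i = -∑ j ∈ s, w j := by
    rw [← add_sum_erase _ _ (mem_univ i)] at hsum; linarith
  obtain ⟨hT, hS⟩ : 0 < ∑ j ∈ s, γ j * w j ^ 2 ∧ 0 < ∑ j ∈ s, (γ j)⁻¹ := by
    obtain ⟨j, hj, hwj⟩ : ∃ j ∈ s, w j ≠ 0 := by
      by_contra! hcon
      refine hw (funext fun j => ?_)
      by_cases hji : j = i
      · simp [hji, hwi, sum_eq_zero hcon]
      · exact hcon j (mem_erase.mpr ⟨hji, mem_univ _⟩)
    refine ⟨sum_pos' (fun m hm => mul_nonneg (hs m hm).le (sq_nonneg _))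
      ⟨j, hj, mul_pos (hs j hj) (pow_two_pos_of_ne_zero hwj)⟩,
      sum_pos (fun m hm => inv_pos.mpr (hs m hm)) ⟨j, hj⟩⟩
  have hcs : w i ^ 2 ≤ (∑ j ∈ s, (γ j)⁻¹) * ∑ j ∈ s, γ j * w j ^ 2 := by
    have := sq_sum_div_le_sum_sq_div s w fun j hj => inv_pos.mpr (hs j hj)
    rw [div_le_iff₀ hS] at this
    simp only [div_inv_eq_mul, mul_comm (w _ ^ 2)] at this
    rw [hwi, neg_sq, mul_comm]
    exact this
  have hcoef : 0 < 1 + γ i * ∑ j ∈ s, (γ j)⁻¹ := by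
    rw [← add_sum_erase _ _ (mem_univ i)] at hinv
    nlinarith [mul_inv_cancel₀ hi.ne]
  rw [← add_sum_erase _ _ (mem_univ i)]
  nlinarith [mul_le_mul_of_nonpos_left hcs hi.le]

namespace Matrix

theorem dotProduct_diagonal_add_const_mulVec {n : Type*} [Fintype n] [DecidableEq n]
    (d : n → ℝ) (c : ℝ) (v : n → ℝ) :
    star v ⬝ᵥ ((diagonal d + of fun _ _ => c) *ᵥ v) = ∑ i, d i * v i ^ 2 + c * (∑ i, v i) ^ 2 := by
  rw [add_mulVec, dotProduct_add]
  congr 1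
  · simp only [star_trivial, mulVec_diagonal, dotProduct]
    exact sum_congr rfl fun i _ => by ring
  · simp only [star_trivial, mulVec, dotProduct, of_apply, ← mul_sum, ← sum_mul]
    ring

theorem posDef_diagonal_add_const_of_sum_mul_sq_pos {k : ℕ} {γ : Fin (k + 1) → ℝ}
    (hγ : ∀ w : Fin (k + 1) → ℝ, w ≠ 0 → ∑ i, w i = 0 → 0 < ∑ i, γ i * w i ^ 2) :
    (diagonal (fun i : Fin k => γ i.succ) + of fun _ _ => γ 0).PosDef := by
  refine .of_dotProduct_mulVec_pos ?_ fun v hv => ?_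
  · rw [IsHermitian, conjTranspose_add, diagonal_conjTranspose]
    rfl
  · have hw : (Fin.cons (-∑ i, v i) v : Fin (k + 1) → ℝ) ≠ 0 := fun h =>
      hv (funext fun i => by simpa using congrFun h i.succ)
    have := hγ _ hw (by simp [Fin.sum_univ_succ])
    rw [dotProduct_diagonal_add_const_mulVec]
    simpa [Fin.sum_univ_succ, add_comm] using this

end Matrix

theorem gini_holder_gamma_matrix_posDef_general
    (k : ℕ) (γ : Fin (k + 1) → ℝ)
    (h : ((∀ i, 0 ≤ γ i) ∧ ∀ i j, γ i = 0 → γ j = 0 → i = j) ∨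
      ∃ i, γ i < 0 ∧ (∀ j, j ≠ i → 0 < γ j) ∧ ∑ j, (γ j)⁻¹ < 0)
    (y : Fin k → ℝ) (hy : ∀ i, 0 < y i) :
    (Matrix.of fun i j : Fin k =>
        1 / (y i * y j) * (∏ ℓ, y ℓ) * ((if i = j then γ j.succ else 0) + γ 0)).PosDef := by
  open Matrix in
  have hA : (diagonal (fun i : Fin k => γ i.succ) + of fun _ _ => γ 0).PosDef := by
    refine posDef_diagonal_add_const_of_sum_mul_sq_pos fun w hw hsum => ?_
    rcases h with ⟨hnonneg, hzero⟩ | ⟨i, hi, hpos, hinv⟩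
    · exact sum_mul_sq_pos_of_nonneg_of_sum_eq_zero hnonneg hzero hw hsum
    · exact sum_mul_sq_pos_of_sum_inv_neg_of_sum_eq_zero hi hpos hinv hw hsum
  set D := diagonal fun i => (y i)⁻¹
  have hD : Function.Injective D.mulVec :=
    mulVec_injective_iff_isUnit.mpr (isUnit_diagonal.mpr (Pi.isUnit_iff.mpr fun i =>
      (inv_pos.mpr (hy i)).ne'.isUnit))
  have hM : (of fun i j : Fin k =>
      1 / (y i * y j) * (∏ ℓ, y ℓ) * ((if i = j then γ j.succ else 0) + γ 0)) =
      (∏ ℓ, y ℓ) • (Dᴴ * (diagonal (fun i : Fin k => γ i.succ) + of fun _ _ => γ 0) * D) := by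
    ext i j
    rcases eq_or_ne i j with rfl | hij <;> simp [D, *] <;> ring
  rw [hM]
  exact (hA.conjTranspose_mul_mul_same hD).smul (prod_pos fun i _ => hy i)

/-- With `γᵢ = rᵢ + sᵢ`, if either all `γ₀,…,γ_k ≥ 0` with at most one
zero, or some `γᵢ < 0`, all other `γⱼ > 0` and `1/γ₀ + ⋯ + 1/γ_k < 0`, then for every
`y ∈ ℝ₊^k` the matrix with entries `(1/(yᵢyⱼ))·(∏ y_ℓ)·(δ_{ij}γⱼ + γ₀)` is positive
definite. -/
theorem gini_holder_gamma_matrix_posDef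
    (k : ℕ) (hk : 2 ≤ k) (γ : Fin (k + 1) → ℝ)
    (h : ((∀ i, 0 ≤ γ i) ∧ ∀ i j, γ i = 0 → γ j = 0 → i = j) ∨
      ∃ i, γ i < 0 ∧ (∀ j, j ≠ i → 0 < γ j) ∧ ∑ j, (γ j)⁻¹ < 0)
    (y : Fin k → ℝ) (hy : ∀ i, 0 < y i) :
    (Matrix.of fun i j : Fin k =>
        1 / (y i * y j) * (∏ ℓ, y ℓ) * ((if i = j then γ j.succ else 0) + γ 0)).PosDef :=
  gini_holder_gamma_matrix_posDef_general k γ h y hy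
end
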